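/- arXiv:1511.09102 — 2 statements merged into one kernel-verified Lean document; each statement's English description precedes it below -/
import Mathlib

section
/- For 0 < q < 1, 0 < z < 1, and n ≥ 1, we have I_{n-1}(q;z) · I_{n+1}(q;z) < (I_n(q;z))^2, where I_n(q;z) = Σ_{k=n+1}^∞ z^k/(q;q)_k is the remainder of the q-exponential series e(q;z). -/
open Finset Filter Topology

noncomputable def qPoch (q : ℝ) (m : ℕ) : ℝ := ∏ j ∈ Finset.range m, (1 - q ^ (j + 1))

/-- Tail of the q-exponential e(q;z) starting at index m; I_n(q;z) = qexpTail q z (n+1). -/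
noncomputable def qexpTail (q z : ℝ) (m : ℕ) : ℝ := ∑' k : ℕ, z ^ (m + k) / qPoch q (m + k)

/-!
Write `a k = z^k / (q;q)_k` and `T m = ∑_{k ≥ m} a k`. The ratio
`a (k+1) / a k = z / (1 - q^(k+1))` strictly decreases in `k`, so `a n * a (k+2) ≤ a (n+1) * a (k+1)` for all `k ≥ n`, strictly for
`k = n`. Summing over `k ≥ n` gives `a n * T (n+2) < a (n+1) * T (n+1)`, and then
`T n * T (n+2) = a n * T (n+2) + T (n+1) * T (n+2) < T (n+1) * (a (n+1) + T (n+2)) = T (n+1)^2`.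
-/

section LogConcaveTail

variable {a : ℕ → ℝ}

theorem Summable.nat_add_left (ha : Summable a) (m : ℕ) : Summable fun k => a (m + k) :=
  (summable_nat_add_iff m).mpr ha |>.congr fun k => by rw [Nat.add_comm]

theorem Summable.tsum_nat_add_eq_add (ha : Summable a) (m : ℕ) :
    ∑' k, a (m + k) = a m + ∑' k, a (m + 1 + k) := by
  rw [(ha.nat_add_left m).tsum_eq_zero_add, Nat.add_zero]
  exact congrArg _ (tsum_congr fun k => congrArg a (by omega))

theorem mul_le_mul_of_ratio_antitone (hpos : ∀ k, 0 < a k)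
    (hanti : Antitone fun k => a (k + 1) / a k) {n k : ℕ} (hnk : n ≤ k) :
    a n * a (k + 1) ≤ a (n + 1) * a k := by
  have h := hanti hnk
  rw [div_le_div_iff₀ (hpos k) (hpos n)] at h
  linarith

theorem tsum_nat_add_mul_lt_sq (hpos : ∀ k, 0 < a k)
    (hanti : StrictAnti fun k => a (k + 1) / a k) (ha : Summable a) (n : ℕ) :
    (∑' k, a (n + k)) * ∑' k, a (n + 2 + k) < (∑' k, a (n + 1 + k)) ^ 2 := by
  set T : ℕ → ℝ := fun m => ∑' k, a (m + k) with hT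
  have hsplit (m : ℕ) : T m = a m + T (m + 1) := ha.tsum_nat_add_eq_add m
  have hkey : a n * T (n + 2) < a (n + 1) * T (n + 1) := by
    simp only [hT, ← tsum_mul_left]
    refine Summable.tsum_lt_tsum (i := 0) (fun k => ?_) ?_
      ((ha.nat_add_left _).mul_left _) ((ha.nat_add_left _).mul_left _)
    · have h := mul_le_mul_of_ratio_antitone hpos hanti.antitone (show n ≤ n + 1 + k by omega)
      rwa [show n + 1 + k + 1 = n + 2 + k by omega] at h
    · have h := hanti (Nat.lt_succ_self n)
      rw [div_lt_div_iff₀ (hpos _) (hpos _)] at h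
      simp only [Nat.add_zero]
      linarith
  calc T n * T (n + 2) = a n * T (n + 2) + T (n + 1) * T (n + 2) := by rw [hsplit n]; ring
    _ < a (n + 1) * T (n + 1) + T (n + 1) * T (n + 2) := by linarith
    _ = T (n + 1) ^ 2 := by rw [hsplit (n + 1)]; ring

end LogConcaveTail

section QExponential

variable {q z : ℝ}

theorem one_sub_pow_succ_pos (hq0 : 0 < q) (hq1 : q < 1) (k : ℕ) : 0 < 1 - q ^ (k + 1) :=
  sub_pos.mpr (pow_lt_one₀ hq0.le hq1 k.succ_ne_zero)

theorem qPoch_pos (hq0 : 0 < q) (hq1 : q < 1) (m : ℕ) : 0 < qPoch q m :=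
  prod_pos fun j _ => one_sub_pow_succ_pos hq0 hq1 j

theorem qexp_term_pos (hq0 : 0 < q) (hq1 : q < 1) (hz0 : 0 < z) (k : ℕ) :
    0 < z ^ k / qPoch q k :=
  div_pos (pow_pos hz0 k) (qPoch_pos hq0 hq1 k)

theorem qexp_term_ratio (hq0 : 0 < q) (hq1 : q < 1) (hz0 : 0 < z) (k : ℕ) :
    z ^ (k + 1) / qPoch q (k + 1) / (z ^ k / qPoch q k) = z / (1 - q ^ (k + 1)) := by
  have := qPoch_pos hq0 hq1 k
  have := one_sub_pow_succ_pos hq0 hq1 k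
  rw [qPoch, prod_range_succ, ← qPoch]
  field_simp
  ring

theorem qexp_term_ratio_strictAnti (hq0 : 0 < q) (hq1 : q < 1) (hz0 : 0 < z) :
    StrictAnti fun k => z ^ (k + 1) / qPoch q (k + 1) / (z ^ k / qPoch q k) := by
  intro k l hkl
  simp only [qexp_term_ratio hq0 hq1 hz0]
  refine div_lt_div_of_pos_left hz0 (one_sub_pow_succ_pos hq0 hq1 k) ?_
  have := pow_lt_pow_right_of_lt_one₀ hq0 hq1 (by omega : k + 1 < l + 1)
  linarith

theorem qexp_term_summable (hq0 : 0 < q) (hq1 : q < 1) (hz0 : 0 < z) (hz1 : z < 1) :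
    Summable fun k => z ^ k / qPoch q k := by
  have hpow : Tendsto (fun k : ℕ => q ^ (k + 1)) atTop (𝓝 0) :=
    (tendsto_pow_atTop_nhds_zero_of_lt_one hq0.le hq1).comp (tendsto_add_atTop_nat 1)
  have hratio : Tendsto (fun k : ℕ => z / (1 - q ^ (k + 1))) atTop (𝓝 (z / (1 - 0))) :=
    tendsto_const_nhds.div (tendsto_const_nhds.sub hpow) (by norm_num)
  rw [sub_zero, div_one] at hratio
  refine summable_of_ratio_test_tendsto_lt_one hz1
    (Eventually.of_forall fun k => (qexp_term_pos hq0 hq1 hz0 k).ne') ?_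
  refine hratio.congr fun k => ?_
  rw [Real.norm_of_nonneg (qexp_term_pos hq0 hq1 hz0 _).le,
    Real.norm_of_nonneg (qexp_term_pos hq0 hq1 hz0 _).le, qexp_term_ratio hq0 hq1 hz0]

end QExponential

theorem turan_right_I_general (q z : ℝ) (n : ℕ) (hq0 : 0 < q) (hq1 : q < 1)
    (hz0 : 0 < z) (hz1 : z < 1) :
    qexpTail q z n * qexpTail q z (n + 2) < (qexpTail q z (n + 1)) ^ 2 :=
  tsum_nat_add_mul_lt_sq (qexp_term_pos hq0 hq1 hz0) (qexp_term_ratio_strictAnti hq0 hq1 hz0)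
    (qexp_term_summable hq0 hq1 hz0 hz1) n

theorem turan_right_I (q z : ℝ) (n : ℕ) (hq0 : 0 < q) (hq1 : q < 1)
    (hz0 : 0 < z) (hz1 : z < 1) (hn : 1 ≤ n) :
    qexpTail q z n * qexpTail q z (n + 2) < (qexpTail q z (n + 1)) ^ 2 :=
  turan_right_I_general q z n hq0 hq1 hz0 hz1
end

section
/- For every integer n ≥ 1 and real x > 0, the Turán type inequality (n+1)/(n+2) · (R_n(x))^2 < R_{n-1}(x) · R_{n+1}(x) < (R_n(x))^2 holds, where R_n(x) = e^x - Σ_{k=0}^n x^k/k! is the remainder of the exponential series (the q → 1 limit of Theorem 2; originally due to Alzer). -/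
open Finset

noncomputable def expRem (n : ℕ) (x : ℝ) : ℝ :=
  Real.exp x - ∑ k ∈ Finset.range (n + 1), x ^ k / (Nat.factorial k)

/-!
By the Cauchy product, `R_{n-1} R_{n+1}` and `R_n²` are power series in `x` whose coefficients of
`x ^ (2n + 2 + m)` are `B = ∑_{i+j=m} 1/((n+i)! (n+2+j)!)` and `C = ∑_{i+j=m} 1/((n+1+i)! (n+1+j)!)`.
Peeling one boundary term off each side of `∑_{i+j=m+1} 1/((n+i)! (n+1+j)!)` shows that `B` and `C`
differ only by `C - B = g / (m+n+2)` with `g = (m+1) / ((n+1)! (m+n+1)!) > 0`. Since every term of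
`C` is at least its extreme term, `g ≤ C`, and both inequalities then hold coefficientwise.
-/

open Nat

theorem factorial_add_mul_factorial_add_le (c i j : ℕ) :
    (i + c)! * (j + c)! ≤ c ! * (i + j + c)! := by
  rw [add_comm i c, add_comm j c, show i + j + c = c + j + i by omega,
    ← factorial_mul_ascFactorial c i, ← factorial_mul_ascFactorial (c + j) i, mul_right_comm,
    mul_assoc]
  exact Nat.mul_le_mul_left _ (Nat.mul_le_mul_left _ (ascFactorial_le i (by omega)))

theorem hasSum_expRem (n : ℕ) (x : ℝ) :
    HasSum (fun k => x ^ (k + (n + 1)) / (k + (n + 1))!) (expRem n x) := by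
  rw [expRem, Real.exp_eq_exp_ℝ]
  exact (hasSum_nat_add_iff' (n + 1)).mpr (NormedSpace.expSeries_div_hasSum_exp x)

/-- The coefficient of `x ^ (a + b + m)` in `(∑_{k ≥ a} x ^ k / k!) * (∑_{k ≥ b} x ^ k / k!)`. -/
noncomputable def tailCoeff (a b m : ℕ) : ℝ :=
  ∑ p ∈ antidiagonal m, 1 / ((p.1 + a)! * (p.2 + b)! : ℝ)

theorem hasSum_expRem_mul_expRem (a b : ℕ) (x : ℝ) :
    HasSum (fun m => x ^ (m + (a + b + 2)) * tailCoeff (a + 1) (b + 1) m)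
      (expRem a x * expRem b x) := by
  have hnorm (n : ℕ) : Summable fun k => ‖x ^ (k + (n + 1)) / (k + (n + 1))!‖ :=
    (hasSum_expRem n x).summable.abs
  convert! (summable_norm_sum_mul_antidiagonal_of_summable_norm (hnorm a) (hnorm b)).of_norm.hasSum
    using 1
  · ext m
    rw [tailCoeff, mul_sum]
    refine sum_congr rfl fun p hp => ?_
    rw [← mem_antidiagonal.mp hp]
    field_simp
    ring
  · rw [← (hasSum_expRem a x).tsum_eq, ← (hasSum_expRem b x).tsum_eq]
    exact tsum_mul_tsum_eq_tsum_sum_antidiagonal_of_summable_norm (hnorm a) (hnorm b)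

/-- Both sides are `tailCoeff a b (m + 1)`, split off at either end of the antidiagonal. -/
theorem tailCoeff_succ_right_add (a b m : ℕ) :
    tailCoeff a (b + 1) m + 1 / ((m + a + 1)! * b ! : ℝ) =
      tailCoeff (a + 1) b m + 1 / (a ! * (m + b + 1)! : ℝ) := by
  have h₁ := Nat.sum_antidiagonal_succ (n := m) (f := fun p => 1 / ((p.1 + a)! * (p.2 + b)! : ℝ))
  have h₂ := Nat.sum_antidiagonal_succ' (n := m) (f := fun p => 1 / ((p.1 + a)! * (p.2 + b)! : ℝ))
  simp only [zero_add, add_right_comm _ 1] at h₁ h₂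
  simp only [tailCoeff, ← add_assoc]
  linarith

theorem card_div_le_tailCoeff (c m : ℕ) :
    (m + 1) / (c ! * (m + c)! : ℝ) ≤ tailCoeff c c m := by
  have hterm : ∀ p ∈ antidiagonal m,
      1 / (c ! * (m + c)! : ℝ) ≤ 1 / ((p.1 + c)! * (p.2 + c)! : ℝ) := by
    intro p hp
    rw [← mem_antidiagonal.mp hp]
    exact one_div_le_one_div_of_le (by positivity)
      (by exact_mod_cast factorial_add_mul_factorial_add_le c p.1 p.2)
  simpa [tailCoeff, div_eq_mul_one_div (m + 1 : ℝ), Nat.card_antidiagonal] using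
    card_nsmul_le_sum _ _ _ hterm

theorem tailCoeff_eq_sub (n m : ℕ) :
    tailCoeff n (n + 2) m =
      tailCoeff (n + 1) (n + 1) m - (m + 1) / ((n + 1)! * (m + (n + 1))! : ℝ) / (m + n + 2) := by
  have hgap : 1 / ((m + n + 1)! * (n + 1)! : ℝ) - 1 / (n ! * (m + (n + 1) + 1)! : ℝ) =
      (m + 1) / ((n + 1)! * (m + (n + 1))! : ℝ) / (m + n + 2) := by
    rw [factorial_succ n, factorial_succ (m + (n + 1)), ← add_assoc]
    push_cast
    field_simp
    ring
  linarith [tailCoeff_succ_right_add n (n + 1) m]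

theorem tailCoeff_lt (n m : ℕ) : tailCoeff n (n + 2) m < tailCoeff (n + 1) (n + 1) m := by
  rw [tailCoeff_eq_sub]
  have : 0 < (m + 1) / ((n + 1)! * (m + (n + 1))! : ℝ) / (m + n + 2) := by positivity
  linarith

theorem mul_tailCoeff_le (n m : ℕ) :
    (n + 1) * tailCoeff (n + 1) (n + 1) m ≤ (n + 2) * tailCoeff n (n + 2) m := by
  rw [tailCoeff_eq_sub]
  set g := (m + 1) / ((n + 1)! * (m + (n + 1))! : ℝ)
  have hg : g ≤ tailCoeff (n + 1) (n + 1) m := card_div_le_tailCoeff (n + 1) m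
  have : (n + 2) * (g / (m + n + 2)) ≤ g := by
    rw [mul_div_left_comm]
    exact mul_le_of_le_one_right (by positivity) ((div_le_one (by positivity)).2 (by linarith))
  linarith

theorem mul_tailCoeff_lt (n : ℕ) {m : ℕ} (hm : 0 < m) :
    (n + 1) * tailCoeff (n + 1) (n + 1) m < (n + 2) * tailCoeff n (n + 2) m := by
  rw [tailCoeff_eq_sub]
  set g := (m + 1) / ((n + 1)! * (m + (n + 1))! : ℝ)
  have hg : g ≤ tailCoeff (n + 1) (n + 1) m := card_div_le_tailCoeff (n + 1) m
  have : (n + 2) * (g / (m + n + 2)) < g := by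
    rw [mul_div_left_comm]
    have hm' : (0 : ℝ) < m := by exact_mod_cast hm
    exact mul_lt_of_lt_one_right (by positivity) ((div_lt_one (by positivity)).2 (by linarith))
  linarith

theorem alzer_turan (n : ℕ) (x : ℝ) (hn : 1 ≤ n) (hx : 0 < x) :
    ((n : ℝ) + 1) / ((n : ℝ) + 2) * (expRem n x) ^ 2 < expRem (n - 1) x * expRem (n + 1) x ∧
    expRem (n - 1) x * expRem (n + 1) x < (expRem n x) ^ 2 := by
  obtain ⟨k, rfl⟩ : ∃ k, n = k + 1 := ⟨n - 1, by omega⟩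
  have hprod := hasSum_expRem_mul_expRem k (k + 2) x
  have hsq := hasSum_expRem_mul_expRem (k + 1) (k + 1) x
  rw [show k + (k + 2) + 2 = k + 1 + (k + 1) + 2 by omega] at hprod
  rw [← sq] at hsq
  have hpow (m : ℕ) : 0 < x ^ (m + (k + 1 + (k + 1) + 2)) := by positivity
  rw [Nat.add_sub_cancel, div_mul_eq_mul_div, div_lt_iff₀ (by positivity), mul_comm _ (_ + 2)]
  constructor
  · refine hasSum_lt (i := 1) (fun m => ?_) ?_ (hsq.mul_left _) (hprod.mul_left _)
    · rw [mul_left_comm, mul_left_comm (_ + 2 : ℝ)]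
      exact mul_le_mul_of_nonneg_left (mul_tailCoeff_le (k + 1) m) (hpow m).le
    · rw [mul_left_comm, mul_left_comm (_ + 2 : ℝ)]
      exact mul_lt_mul_of_pos_left (mul_tailCoeff_lt (k + 1) one_pos) (hpow 1)
  · refine hasSum_lt (i := 0) (fun m => ?_) ?_ hprod hsq
    · exact mul_le_mul_of_nonneg_left (tailCoeff_lt (k + 1) m).le (hpow m).le
    · exact mul_lt_mul_of_pos_left (tailCoeff_lt (k + 1) 0) (hpow 0)
end
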